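/- If simplicial complexes L and N have the same strong homotopy type via α : L → N and β : N → L, then L^n and N^n (categorical n-fold products) have the same strong homotopy type via α^n and β^n. -/

import Mathlib

noncomputable section

/-- An abstract simplicial complex on a vertex type `V`. -/
structure ASC (V : Type) where
  faces : Set (Finset V)
  nonempty_of_mem : ∀ ⦃σ⦄, σ ∈ faces → σ.Nonempty
  down_closed : ∀ ⦃σ⦄, σ ∈ faces → ∀ ⦃τ⦄, τ ⊆ σ → τ.Nonempty → τ ∈ faces

/-- A simplicial map between abstract simplicial complexes. -/
structure SMap {V W : Type} [DecidableEq W] (K : ASC V) (L : ASC W) where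
  toFun : V → W
  map_faces : ∀ ⦃σ⦄, σ ∈ K.faces → σ.image toFun ∈ L.faces

/-- The identity simplicial map. -/
def SMap.id {V : Type} [DecidableEq V] (K : ASC V) : SMap K K :=
  ⟨fun v => v, fun σ hσ => by simpa using hσ⟩

/-- Composition of simplicial maps. -/
def SMap.comp {U V W : Type} [DecidableEq V] [DecidableEq W]
    {K : ASC U} {L : ASC V} {M : ASC W}
    (g : SMap L M) (f : SMap K L) : SMap K M :=
  ⟨g.toFun ∘ f.toFun, fun σ hσ => by
    rw [show σ.image (g.toFun ∘ f.toFun) = (σ.image f.toFun).image g.toFun by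
      simp [Finset.image_image]]
    exact g.map_faces (f.map_faces hσ)⟩

/-- Two simplicial maps are contiguous if the union of the images of every
simplex is a simplex of the codomain. -/
def Contiguous {V W : Type} [DecidableEq W] {K : ASC V} {L : ASC W}
    (f g : SMap K L) : Prop :=
  ∀ ⦃σ⦄, σ ∈ K.faces → σ.image f.toFun ∪ σ.image g.toFun ∈ L.faces

/-- Two simplicial maps are in the same contiguity class if they are joined by
a finite chain of pairwise contiguous simplicial maps. -/
def ContigClass {V W : Type} [DecidableEq W] {K : ASC V} {L : ASC W}
    (f g : SMap K L) : Prop :=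
  Relation.ReflTransGen Contiguous f g

/-- `N` is a subcomplex of `K`. -/
def IsSubcomplex {V : Type} (N K : ASC V) : Prop :=
  N.faces ⊆ K.faces

/-- Restriction of a simplicial map to a subcomplex. -/
def SMap.restrict {V W : Type} [DecidableEq W] {N K : ASC V} {L : ASC W}
    (h : IsSubcomplex N K) (f : SMap K L) : SMap N L :=
  ⟨f.toFun, fun _ hσ => f.map_faces (h hσ)⟩

/-- `SDcover φ n` : the domain is covered by `n+1` subcomplexes on each of which
all restrictions of the maps `φ i` are pairwise in the same contiguity class. -/
def SDcover {V W : Type} [DecidableEq W] {K : ASC V} {L : ASC W} {m : ℕ}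
    (φ : Fin m → SMap K L) (n : ℕ) : Prop :=
  ∃ (Ls : Fin (n + 1) → ASC V) (h : ∀ k, IsSubcomplex (Ls k) K),
    (∀ σ ∈ K.faces, ∃ k, σ ∈ (Ls k).faces) ∧
    ∀ k i j, ContigClass (SMap.restrict (h k) (φ i)) (SMap.restrict (h k) (φ j))

/-- The higher contiguity distance `SD(φ₁, …, φ_m)` as a value in `ℕ∞`. -/
def SD {V W : Type} [DecidableEq W] {K : ASC V} {L : ASC W} {m : ℕ}
    (φ : Fin m → SMap K L) : ℕ∞ :=
  sInf {N : ℕ∞ | ∃ n : ℕ, N = n ∧ SDcover φ n}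

/-- The `n`-fold categorical power of a simplicial complex. -/
def ASC.pow {V : Type} [DecidableEq V] (K : ASC V) (n : ℕ) : ASC (Fin n → V) where
  faces := {σ | σ.Nonempty ∧ ∀ i, σ.image (fun v => v i) ∈ K.faces}
  nonempty_of_mem := fun _ hσ => hσ.1
  down_closed := fun σ hσ τ hτσ hτ =>
    ⟨hτ, fun i => K.down_closed (hσ.2 i)
      (Finset.image_subset_image (f := fun v => v i) hτσ) (hτ.image _)⟩

/-- The `i`-th projection from the `n`-fold categorical power. -/
def ASC.proj {V : Type} [DecidableEq V] (K : ASC V) (n : ℕ) (i : Fin n) :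
    SMap (K.pow n) K :=
  ⟨fun v => v i, fun _ hσ => hσ.2 i⟩

/-- The power of a simplicial map. -/
def SMap.pow {V W : Type} [DecidableEq V] [DecidableEq W] {K : ASC V} {L : ASC W}
    (f : SMap K L) (n : ℕ) : SMap (K.pow n) (L.pow n) :=
  ⟨fun v i => f.toFun (v i), fun σ hσ => by
    obtain ⟨h1, h2⟩ := hσ
    refine ⟨h1.image _, fun i => ?_⟩
    rw [Finset.image_image]
    have hf := f.map_faces (h2 i)
    rw [Finset.image_image] at hf
    exact hf⟩

/-- The higher discrete topological complexity `TC_n(K)`. -/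
def TCn {V : Type} [DecidableEq V] (K : ASC V) (n : ℕ) : ℕ∞ :=
  SD (fun i : Fin n => K.proj n i)

/-- The higher discrete topological complexity of a simplicial map. -/
def TCnMap {V W : Type} [DecidableEq V] [DecidableEq W] {K : ASC V} {L : ASC W}
    (φ : SMap K L) (n : ℕ) : ℕ∞ :=
  SD (fun i : Fin n => φ.comp (K.proj n i))

/-- The binary categorical product of two simplicial complexes. -/
def ASC.prod {V W : Type} [DecidableEq V] [DecidableEq W]
    (K : ASC V) (L : ASC W) : ASC (V × W) where
  faces := {σ | σ.Nonempty ∧ σ.image Prod.fst ∈ K.faces ∧ σ.image Prod.snd ∈ L.faces}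
  nonempty_of_mem := fun _ hσ => hσ.1
  down_closed := fun σ hσ τ hτσ hτ =>
    ⟨hτ, K.down_closed hσ.2.1 (Finset.image_subset_image hτσ) (hτ.image _),
      L.down_closed hσ.2.2 (Finset.image_subset_image hτσ) (hτ.image _)⟩

/-- The path complex `I_m` : vertices `0, …, m`, maximal simplices `{i, i+1}`. -/
def pathComplex (m : ℕ) : ASC (Fin (m + 1)) where
  faces := {σ | σ.Nonempty ∧ ∃ i : ℕ, ∀ j ∈ σ, (j : ℕ) = i ∨ (j : ℕ) = i + 1}
  nonempty_of_mem := fun _ hσ => hσ.1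
  down_closed := fun _ hσ _ hτσ hτ =>
    ⟨hτ, hσ.2.imp fun _ h => fun j hj => h j (hτσ hj)⟩

/-- Two simplicial complexes have the same strong homotopy type. -/
def StrongHomotopyType {V W : Type} [DecidableEq V] [DecidableEq W]
    (K : ASC V) (L : ASC W) : Prop :=
  ∃ (f : SMap K L) (g : SMap L K),
    ContigClass (g.comp f) (SMap.id K) ∧ ContigClass (f.comp g) (SMap.id L)

/-- The one-point simplicial complex. -/
def ptASC : ASC Unit where
  faces := {σ | σ.Nonempty}
  nonempty_of_mem := fun _ hσ => hσ
  down_closed := fun _ _ _ _ hτ => hτ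

/-- A simplicial complex is strongly collapsible if it has the strong homotopy
type of a point. -/
def StronglyCollapsible {V : Type} [DecidableEq V] (K : ASC V) : Prop :=
  StrongHomotopyType K ptASC

/-- The inclusion `N → N × I_m` at level `0`. -/
def inclZero {V : Type} [DecidableEq V] (N : ASC V) (m : ℕ) :
    SMap N (N.prod (pathComplex m)) :=
  ⟨fun v => (v, 0), fun σ hσ => by
    refine ⟨(N.nonempty_of_mem hσ).image _, ?_, ?_⟩
    · rw [Finset.image_image, show (Prod.fst ∘ fun v : V => (v, (0 : Fin (m + 1))))
        = fun v => v from rfl, Finset.image_id']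
      exact hσ
    · rw [Finset.image_image]
      refine ⟨(N.nonempty_of_mem hσ).image _, 0, fun j hj => ?_⟩
      simp only [Finset.mem_image, Function.comp] at hj
      obtain ⟨v, -, rfl⟩ := hj
      simp⟩

/-- A simplicial finite-fibration : the homotopy lifting property with respect
to simplicial homotopies `N × I_m → L'` with `N` finite. -/
def IsFiniteFibration {V W : Type} [DecidableEq V] [DecidableEq W]
    {K : ASC V} {L : ASC W} (φ : SMap K L) : Prop :=
  ∀ (U : Type) [Fintype U] [DecidableEq U] (N : ASC U) (m : ℕ) (g : SMap N K)
    (G : SMap (N.prod (pathComplex m)) L),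
    (∀ v, G.toFun (v, 0) = φ.toFun (g.toFun v)) →
    ∃ Gt : SMap (N.prod (pathComplex m)) K,
      (∀ v, Gt.toFun (v, 0) = g.toFun v) ∧ (∀ x, φ.toFun (Gt.toFun x) = G.toFun x)

/-- The constant simplicial map at a vertex `v₀` of `L`. -/
def constMap {V W : Type} [DecidableEq W] (K : ASC V) {L : ASC W} {v₀ : W}
    (hv₀ : {v₀} ∈ L.faces) : SMap K L :=
  ⟨fun _ => v₀, fun σ hσ => by
    have hsub : σ.image (fun _ => v₀) ⊆ {v₀} := by
      intro x hx
      simp only [Finset.mem_image] at hx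
      obtain ⟨v, -, rfl⟩ := hx
      simp
    exact L.down_closed hv₀ hsub ((K.nonempty_of_mem hσ).image _)⟩

/-- A simplicial map is a strong equivalence if it admits an inverse up to
contiguity class. -/
def IsStrongEquiv {V W : Type} [DecidableEq V] [DecidableEq W]
    {K : ASC V} {L : ASC W} (f : SMap K L) : Prop :=
  ∃ g : SMap L K,
    ContigClass (g.comp f) (SMap.id K) ∧ ContigClass (f.comp g) (SMap.id L)

section Pow

variable {V W : Type} [DecidableEq V] [DecidableEq W] {K : ASC V} {M : ASC W}

theorem SMap.image_pow_image_eval (f : SMap K M) {n : ℕ} (σ : Finset (Fin n → V))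
    (i : Fin n) :
    (σ.image (f.pow n).toFun).image (fun v => v i) = (σ.image (fun v => v i)).image f.toFun := by
  simp only [Finset.image_image]
  rfl

theorem SMap.pow_comp {U : Type} [DecidableEq U] {P : ASC U} (g : SMap M P) (f : SMap K M)
    (n : ℕ) : (g.pow n).comp (f.pow n) = (g.comp f).pow n :=
  rfl

theorem SMap.id_pow (K : ASC V) (n : ℕ) : (SMap.id K).pow n = SMap.id (K.pow n) :=
  rfl

theorem Contiguous.pow {f g : SMap K M} (h : Contiguous f g) (n : ℕ) :
    Contiguous (f.pow n) (g.pow n) := by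
  intro σ hσ
  refine ⟨(hσ.1.image _).mono Finset.subset_union_left, fun i => ?_⟩
  rw [Finset.image_union, f.image_pow_image_eval, g.image_pow_image_eval]
  exact h (hσ.2 i)

theorem ContigClass.pow {f g : SMap K M} (h : ContigClass f g) (n : ℕ) :
    ContigClass (f.pow n) (g.pow n) :=
  Relation.ReflTransGen.lift (SMap.pow · n) (fun _ _ hc => hc.pow n) _ _ h

end Pow

/-- a strong homotopy equivalence between `L` and `N` induces one
between `L^n` and `N^n` via the power maps `α^n` and `β^n`. -/
theorem strongHomotopyType_pow
    {V W : Type} [DecidableEq V] [DecidableEq W] {L : ASC V} {N : ASC W}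
    (alpha : SMap L N) (beta : SMap N L)
    (h1 : ContigClass (beta.comp alpha) (SMap.id L))
    (h2 : ContigClass (alpha.comp beta) (SMap.id N)) (n : ℕ) :
    ContigClass ((beta.pow n).comp (alpha.pow n)) (SMap.id (L.pow n)) ∧
    ContigClass ((alpha.pow n).comp (beta.pow n)) (SMap.id (N.pow n)) := by
  rw [SMap.pow_comp, SMap.pow_comp, ← SMap.id_pow, ← SMap.id_pow]
  exact ⟨h1.pow n, h2.pow n⟩
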